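/- arXiv:1902.03959 — 3 statements merged into one kernel-verified Lean document; each statement's English description precedes it below -/
import Mathlib

section
/- For every real ν > 0, real c > 0, and real z with 0 < z < 1, one has (1/Γ(ν)) ∫_0^∞ x^{ν−1} e^{−c x} / (z^{−1} e^{x} − 1) dx = ∑_{n=1}^∞ z^n/(c+n)^ν, where Γ is the real Gamma function and the integral is over (0,∞). -/
/-!
Expanding `e^{-cx} / (z⁻¹ e^x - 1) = ∑_{n ≥ 0} z^{n+1} e^{-(c+n+1)x}` as a geometric series in
`z e^{-x}` and integrating term by term against `x^{ν-1}` gives `Γ(ν) z^{n+1} / (c+n+1)^ν` for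
each term. The interchange is justified by `∑ |z|^{n+1} / (c+n+1)^ν < ∞`, which is exactly the
hypothesis of Mathlib's `hasSum_mellin` (Mellin transforms of exponential series are Dirichlet
series); we only transport it from `ℂ` to `ℝ`.
-/

open Real MeasureTheory

theorem mellin_ofReal (F : ℝ → ℝ) (s : ℝ) :
    mellin (fun t ↦ (F t : ℂ)) s = ((∫ t in Set.Ioi 0, t ^ (s - 1) * F t : ℝ) : ℂ) := by
  rw [mellin, ← integral_complex_ofReal]
  refine setIntegral_congr_fun measurableSet_Ioi fun t (ht : 0 < t) ↦ ?_
  rw [smul_eq_mul, ← Complex.ofReal_one, ← Complex.ofReal_sub, ← Complex.ofReal_cpow ht.le,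
    Complex.ofReal_mul]

theorem Real.hasSum_mellin {ι : Type*} [Countable ι] {a p : ι → ℝ} {F : ℝ → ℝ} {s : ℝ}
    (hp : ∀ i, 0 < p i) (hs : 0 < s)
    (hF : ∀ t ∈ Set.Ioi 0, HasSum (fun i ↦ a i * exp (-p i * t)) (F t))
    (h_sum : Summable fun i ↦ |a i| / p i ^ s) :
    HasSum (fun i ↦ Gamma s * a i / p i ^ s) (∫ t in Set.Ioi 0, t ^ (s - 1) * F t) := by
  have hsum := _root_.hasSum_mellin (a := fun i ↦ (a i : ℂ)) (p := p) (F := fun t ↦ (F t : ℂ))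
    (s := s) (fun i ↦ Or.inr (hp i)) (by simpa using hs)
    (fun t ht ↦ by exact_mod_cast Complex.hasSum_ofReal.mpr (hF t ht))
    (by simpa using h_sum)
  rw [mellin_ofReal] at hsum
  rw [← Complex.hasSum_ofReal]
  convert hsum using 2 with i
  rw [← Complex.ofReal_cpow (hp i).le, Complex.Gamma_ofReal]
  push_cast
  rfl

theorem hasSum_pow_succ_mul_exp {z t : ℝ} (c : ℝ) (hz : z ≠ 0) (hzt : |z| < exp t) :
    HasSum (fun n : ℕ ↦ z ^ (n + 1) * exp (-(c + (n + 1)) * t))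
      (exp (-(c * t)) / (z⁻¹ * exp t - 1)) := by
  set r := z * exp (-t) with hr
  have hr1 : |r| < 1 := by
    rw [hr, abs_mul, abs_of_pos (exp_pos _), exp_neg, ← div_eq_mul_inv]
    exact (div_lt_one (exp_pos t)).mpr hzt
  have hterm (n : ℕ) : exp (-(c * t)) * r * r ^ n = z ^ (n + 1) * exp (-(c + (n + 1)) * t) := by
    rw [mul_assoc, ← pow_succ', hr, mul_pow, ← exp_nat_mul, mul_left_comm, ← exp_add]
    push_cast
    ring_nf
  have hsum : exp (-(c * t)) * r * (1 - r)⁻¹ = exp (-(c * t)) / (z⁻¹ * exp t - 1) := by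
    have hr0 : r ≠ 0 := mul_ne_zero hz (exp_pos _).ne'
    have hr1' : 1 - r ≠ 0 := by linarith [le_abs_self r]
    rw [show z⁻¹ * exp t = r⁻¹ by rw [hr, mul_inv, exp_neg, inv_inv]]
    field_simp
  simpa only [hterm, hsum] using (hasSum_geometric_of_abs_lt_one hr1).mul_left (exp (-(c * t)) * r)

theorem summable_abs_pow_succ_div_rpow {z c ν : ℝ} (hz : |z| < 1) (hc : 0 ≤ c) (hν : 0 ≤ ν) :
    Summable fun n : ℕ ↦ |z ^ (n + 1)| / (c + (n + 1)) ^ ν := by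
  refine .of_nonneg_of_le (fun n ↦ by positivity) (fun n ↦ div_le_self (abs_nonneg _) ?_)
    ((summable_geometric_of_abs_lt_one hz).abs.comp_injective (add_left_injective 1))
  exact one_le_rpow (by linarith [n.cast_nonneg (α := ℝ)]) hν

/-- For every real ν > 0, real c > 0, and real z with 0 < z < 1,
(1/Γ(ν)) ∫_0^∞ x^{ν−1} e^{−c x} / (z^{−1} e^{x} − 1) dx = ∑_{n=1}^∞ z^n/(c+n)^ν. -/
theorem lerch_integral_repr (ν c z : ℝ) (hν : 0 < ν) (hc : 0 < c) (hz0 : 0 < z)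
    (hz1 : z < 1) :
    (1 / Real.Gamma ν) *
      ∫ x in Set.Ioi (0 : ℝ), x ^ (ν - 1) * Real.exp (-(c * x)) / (z⁻¹ * Real.exp x - 1) =
    ∑' n : ℕ, z ^ (n + 1) / (c + (n + 1 : ℕ)) ^ ν := by
  have hz : |z| < 1 := by rwa [abs_of_pos hz0]
  have hsum := Real.hasSum_mellin (p := fun n : ℕ ↦ c + (n + 1)) (fun n ↦ by positivity) hν
    (fun t (ht : 0 < t) ↦ hasSum_pow_succ_mul_exp c hz0.ne' (hz.trans (one_lt_exp_iff.mpr ht)))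
    (summable_abs_pow_succ_div_rpow hz hc.le hν.le)
  simp only [mul_div_assoc] at hsum ⊢
  rw [one_div_mul_eq_div, ← hsum.tsum_eq, ← tsum_div_const]
  refine tsum_congr fun n ↦ ?_
  push_cast
  field_simp [(Gamma_pos_of_pos hν).ne']
end

section
/- (Eigenvalue equation D_L Φ(ν) = −ν Φ(ν) for the Lerch number operator D_L = D_L^− D_L^+.) Fix a real ν, a real c > 0, and a real z with |z| < 1, and write Φ(ν,z,c) = ∑_{n=1}^∞ z^n/(c+n)^ν. Then z · (d/dz)[ (d/dc) Φ(ν,z,c) ] + c · (d/dc) Φ(ν,z,c) = −ν · Φ(ν,z,c), where the inner derivative (d/dc)Φ(ν,z,c) = −ν ∑_{n=1}^∞ z^n/(c+n)^{ν+1} and all derivatives are one-variable derivatives of the corresponding tsum functions. -/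
/-!
Termwise, `∂/∂c` sends `zⁿ/(c + n)^ν` to `-ν zⁿ/(c + n)^(ν+1)`, so `D⁺ Φ(ν) = -ν Φ(ν + 1)`, and
`z ∂/∂z + c` multiplies `zⁿ/(c + n)^(ν+1)` by `n + c`, so `D⁻ Φ(ν + 1) = Φ(ν)`. Both termwise
differentiations are justified by domination, locally uniformly, by `rⁿ (c + n)^m` with `r < 1`.
-/

open Filter Topology

lemma summable_succ_pow_mul_geometric (k : ℕ) {r : ℝ} (hr : ‖r‖ < 1) :
    Summable fun n : ℕ => ((n : ℝ) + 1) ^ k * r ^ n := by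
  simp only [add_pow, one_pow, mul_one, Finset.sum_mul]
  exact summable_sum fun i _ =>
    ((summable_pow_mul_geometric_of_norm_lt_one i hr).mul_left (k.choose i : ℝ)).congr
      fun n => by ring

lemma summable_geometric_mul_add_pow {r a : ℝ} (hr₀ : 0 ≤ r) (hr₁ : r < 1) (ha : 0 ≤ a) (m : ℕ) :
    Summable fun n : ℕ => r ^ n * (a + (n + 1 : ℕ)) ^ m := by
  refine ((summable_succ_pow_mul_geometric m (by rwa [Real.norm_of_nonneg hr₀])).mul_left
    ((a + 1) ^ m)).of_nonneg_of_le (fun n => by positivity) fun n => ?_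
  have hbase : a + (n + 1 : ℕ) ≤ (a + 1) * ((n : ℝ) + 1) := by
    push_cast
    nlinarith [n.cast_nonneg (α := ℝ)]
  calc r ^ n * (a + (n + 1 : ℕ)) ^ m ≤ r ^ n * ((a + 1) * ((n : ℝ) + 1)) ^ m := by gcongr
    _ = (a + 1) ^ m * (((n : ℝ) + 1) ^ m * r ^ n) := by rw [mul_pow]; ring

lemma abs_div_rpow_le_mul_pow (w : ℝ) {x X s : ℝ} {m : ℕ} (hx : 1 ≤ x) (hxX : x ≤ X)
    (hs : |s| ≤ m) : |w / x ^ s| ≤ |w| * X ^ m := by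
  rw [abs_div, abs_of_pos (Real.rpow_pos_of_pos (by linarith) s), div_eq_mul_inv,
    ← Real.rpow_neg (by linarith)]
  gcongr
  calc x ^ (-s) ≤ x ^ (m : ℝ) := Real.rpow_le_rpow_of_exponent_le hx ((neg_le_abs s).trans hs)
    _ = x ^ m := Real.rpow_natCast x m
    _ ≤ X ^ m := pow_le_pow_left₀ (by linarith) hxX m

lemma hasDerivAt_div_add_rpow (w b ν : ℝ) {y : ℝ} (hy : 0 < y + b) :
    HasDerivAt (fun y' => w / (y' + b) ^ ν) (-ν * (w / (y + b) ^ (ν + 1))) y := by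
  have hpos := Real.rpow_pos_of_pos hy ν
  have h := ((((hasDerivAt_id' y).add_const b).rpow_const (p := ν) (Or.inl hy.ne')).fun_inv
    hpos.ne').const_mul w
  simp only [← div_eq_mul_inv] at h
  refine h.congr_deriv ?_
  rw [Real.rpow_add_one hy.ne', Real.rpow_sub_one hy.ne']
  field_simp

lemma one_le_add_natCast_succ {y : ℝ} (hy : 0 ≤ y) (n : ℕ) : 1 ≤ y + (n + 1 : ℕ) := by
  have : (1 : ℝ) ≤ (n + 1 : ℕ) := by exact_mod_cast n.succ_pos
  linarith

/-- `Φ(ν, z, c) = ∑_{n ≥ 1} zⁿ / (c + n)^ν`, reindexed to start at `n = 0`. -/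
noncomputable def lerchPhi (ν z c : ℝ) : ℝ := ∑' n : ℕ, z ^ (n + 1) / (c + (n + 1 : ℕ)) ^ ν

section

variable {z c : ℝ}

lemma summable_lerchPhi (s : ℝ) (hz : |z| < 1) (hc : 0 ≤ c) :
    Summable fun n : ℕ => z ^ (n + 1) / (c + (n + 1 : ℕ)) ^ s := by
  refine Summable.of_norm_bounded
    ((summable_geometric_mul_add_pow (abs_nonneg z) hz hc ⌈|s|⌉₊).mul_left |z|) fun n => ?_
  calc ‖z ^ (n + 1) / (c + (n + 1 : ℕ)) ^ s‖
      ≤ |z ^ (n + 1)| * (c + (n + 1 : ℕ)) ^ ⌈|s|⌉₊ :=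
        abs_div_rpow_le_mul_pow _ (one_le_add_natCast_succ hc n) le_rfl (Nat.le_ceil _)
    _ = |z| * (|z| ^ n * (c + (n + 1 : ℕ)) ^ ⌈|s|⌉₊) := by rw [abs_pow, pow_succ]; ring

lemma abs_succ_mul_pow_div_rpow_le (s : ℝ) {y r : ℝ} (hy : |y| ≤ r) (hc : 0 ≤ c) (n : ℕ) :
    |(n + 1 : ℕ) * y ^ n / (c + (n + 1 : ℕ)) ^ s| ≤ r ^ n * (c + (n + 1 : ℕ)) ^ (⌈|s|⌉₊ + 1) := by
  have hX := one_le_add_natCast_succ hc n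
  calc |(n + 1 : ℕ) * y ^ n / (c + (n + 1 : ℕ)) ^ s|
      ≤ |(n + 1 : ℕ) * y ^ n| * (c + (n + 1 : ℕ)) ^ ⌈|s|⌉₊ :=
        abs_div_rpow_le_mul_pow _ hX le_rfl (Nat.le_ceil _)
    _ = (n + 1 : ℕ) * |y| ^ n * (c + (n + 1 : ℕ)) ^ ⌈|s|⌉₊ := by
        rw [abs_mul, abs_pow, Nat.abs_cast]
    _ ≤ (c + (n + 1 : ℕ)) * r ^ n * (c + (n + 1 : ℕ)) ^ ⌈|s|⌉₊ := by
        gcongr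
        linarith
    _ = r ^ n * (c + (n + 1 : ℕ)) ^ (⌈|s|⌉₊ + 1) := by ring

lemma summable_succ_mul_pow_div_rpow (s : ℝ) (hz : |z| < 1) (hc : 0 ≤ c) :
    Summable fun n : ℕ => (n + 1 : ℕ) * z ^ n / (c + (n + 1 : ℕ)) ^ s :=
  (summable_geometric_mul_add_pow (abs_nonneg z) hz hc _).of_norm_bounded
    (abs_succ_mul_pow_div_rpow_le s le_rfl hc)

theorem hasDerivAt_lerchPhi_shift (ν : ℝ) (hz : |z| < 1) (hc : 0 < c) :
    HasDerivAt (lerchPhi ν z) (-ν * lerchPhi (ν + 1) z c) c := by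
  have hmem : c ∈ Set.Ioo 0 (c + 1) := ⟨hc, lt_add_one c⟩
  have hu := (summable_geometric_mul_add_pow (abs_nonneg z) hz (by linarith : 0 ≤ c + 1)
    ⌈|ν + 1|⌉₊).mul_left (|ν| * |z|)
  have hbound (n : ℕ) (y : ℝ) (hy : y ∈ Set.Ioo 0 (c + 1)) :
      ‖-ν * (z ^ (n + 1) / (y + (n + 1 : ℕ)) ^ (ν + 1))‖ ≤
        |ν| * |z| * (|z| ^ n * (c + 1 + (n + 1 : ℕ)) ^ ⌈|ν + 1|⌉₊) :=
    calc ‖-ν * (z ^ (n + 1) / (y + (n + 1 : ℕ)) ^ (ν + 1))‖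
        ≤ |ν| * (|z ^ (n + 1)| * (c + 1 + (n + 1 : ℕ)) ^ ⌈|ν + 1|⌉₊) := by
          rw [Real.norm_eq_abs, abs_mul, abs_neg]
          gcongr
          exact abs_div_rpow_le_mul_pow _ (one_le_add_natCast_succ hy.1.le n)
            (by linarith [hy.2]) (Nat.le_ceil _)
      _ = |ν| * |z| * (|z| ^ n * (c + 1 + (n + 1 : ℕ)) ^ ⌈|ν + 1|⌉₊) := by
          rw [abs_pow, pow_succ]; ring
  have key := hasDerivAt_tsum_of_isPreconnected hu isOpen_Ioo isPreconnected_Ioo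
    (g := fun n c' => z ^ (n + 1) / (c' + (n + 1 : ℕ)) ^ ν)
    (fun n y hy => hasDerivAt_div_add_rpow _ _ _ (by linarith [one_le_add_natCast_succ hy.1.le n]))
    hbound hmem (summable_lerchPhi ν hz hc.le) hmem
  rwa [tsum_mul_left] at key

theorem hasDerivAt_lerchPhi_arg (s : ℝ) (hz : |z| < 1) (hc : 0 ≤ c) :
    HasDerivAt (lerchPhi s · c) (∑' n : ℕ, (n + 1 : ℕ) * z ^ n / (c + (n + 1 : ℕ)) ^ s) z := by
  obtain ⟨r, hzr, hr⟩ := exists_between hz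
  have hmem : z ∈ Set.Ioo (-r) r := abs_lt.1 hzr
  exact hasDerivAt_tsum_of_isPreconnected
    (summable_geometric_mul_add_pow ((abs_nonneg z).trans hzr.le) hr hc (⌈|s|⌉₊ + 1))
    isOpen_Ioo isPreconnected_Ioo
    (g := fun n z' => z' ^ (n + 1) / (c + (n + 1 : ℕ)) ^ s)
    (fun n y _ => by simpa using (hasDerivAt_pow (n + 1) y).div_const ((c + (n + 1 : ℕ)) ^ s))
    (fun n y hy => abs_succ_mul_pow_div_rpow_le s (abs_lt.2 hy).le hc n)
    hmem (summable_lerchPhi s hz hc) hmem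

theorem lerchPhi_lowering (s : ℝ) (hz : |z| < 1) (hc : 0 ≤ c) :
    z * deriv (lerchPhi (s + 1) · c) z + c * lerchPhi (s + 1) z c = lerchPhi s z c := by
  rw [(hasDerivAt_lerchPhi_arg (s + 1) hz hc).deriv, lerchPhi, lerchPhi, ← tsum_mul_left,
    ← tsum_mul_left, ← ((summable_succ_mul_pow_div_rpow _ hz hc).mul_left z).tsum_add
      ((summable_lerchPhi _ hz hc).mul_left c)]
  refine tsum_congr fun n => ?_
  have hX : 0 < c + (n + 1 : ℕ) := by linarith [one_le_add_natCast_succ hc n]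
  have hXs := Real.rpow_pos_of_pos hX s
  rw [Real.rpow_add_one hX.ne']
  field_simp
  ring

end

/-- Eigenvalue equation D_L Φ(ν) = −ν Φ(ν) for D_L = D_L⁻ D_L⁺: Fix real ν,
real c > 0, and real z with |z| < 1, writing Φ(ν,z,c) = ∑_{n=1}^∞ z^n/(c+n)^ν. Then
z · (d/dz)[(d/dc)Φ(ν,z,c)] + c · (d/dc)Φ(ν,z,c) = −ν · Φ(ν,z,c), where the inner derivative
(d/dc)Φ(ν,z,c) = −ν ∑_{n=1}^∞ z^n/(c+n)^{ν+1} and all derivatives are one-variable derivatives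
of the corresponding tsum functions. -/
theorem lerch_number_operator_eigenvalue (ν c z : ℝ) (hc : 0 < c) (hz : |z| < 1) :
    (∀ z' : ℝ, |z'| < 1 →
        deriv (fun c' : ℝ => ∑' n : ℕ, z' ^ (n + 1) / (c' + (n + 1 : ℕ)) ^ ν) c =
          -ν * ∑' n : ℕ, z' ^ (n + 1) / (c + (n + 1 : ℕ)) ^ (ν + 1)) ∧
    z * deriv (fun z' : ℝ =>
          deriv (fun c' : ℝ => ∑' n : ℕ, z' ^ (n + 1) / (c' + (n + 1 : ℕ)) ^ ν) c) z +
        c * deriv (fun c' : ℝ => ∑' n : ℕ, z ^ (n + 1) / (c' + (n + 1 : ℕ)) ^ ν) c =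
      -ν * ∑' n : ℕ, z ^ (n + 1) / (c + (n + 1 : ℕ)) ^ ν := by
  change (∀ z' : ℝ, |z'| < 1 → deriv (lerchPhi ν z') c = -ν * lerchPhi (ν + 1) z' c) ∧
    z * deriv (fun z' => deriv (lerchPhi ν z') c) z + c * deriv (lerchPhi ν z) c =
      -ν * lerchPhi ν z c
  have raising (z' : ℝ) (hz' : |z'| < 1) : deriv (lerchPhi ν z') c = -ν * lerchPhi (ν + 1) z' c :=
    (hasDerivAt_lerchPhi_shift ν hz' hc).deriv
  refine ⟨raising, ?_⟩
  have hnhds :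
      (fun z' => deriv (lerchPhi ν z') c) =ᶠ[𝓝 z] fun z' => -ν * lerchPhi (ν + 1) z' c := by
    filter_upwards [(isOpen_lt continuous_abs continuous_const).mem_nhds hz] using raising
  rw [hnhds.deriv_eq, deriv_const_mul _ (hasDerivAt_lerchPhi_arg (ν + 1) hz hc.le).differentiableAt,
    raising z hz, ← lerchPhi_lowering ν hz hc.le]
  ring
end

section
/- For every real ν with ν > 0 and ν ≠ 1, the quantity n(ν) = (ζ(ν) − 1)/(1 − ν^{−1}) is strictly positive, where ζ is the Riemann zeta function evaluated at the real argument ν (equivalently, 0 < (Re(riemannZeta ν) − 1)/(1 − 1/ν)). -/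
/-!
For `ν > 1` the Dirichlet series gives `ζ ν > 1`, while `1 - 1/ν > 0`. For `0 < ν < 1` numerator
and denominator are both negative. Grouping the alternating series in pairs,
`η s = ∑ ((2k+1)^(-s) - (2k+2)^(-s))`, the mean value theorem bounds the `k`-th pair by
`‖s‖ (2k+1)^(-re s - 1)`, so `η` is holomorphic on `re s > 0`. Splitting `ζ` into odd and even
terms gives `η s = (1 - 2 * 2^(-s)) ζ s` for `re s > 1`, and analytic continuation extends this
to `re s > 0`. At real `ν ∈ (0, 1)` every pair is positive, so `η ν > 0`, while
`1 - 2 * 2^(-ν) < 0`; hence `ζ ν < 0`.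
-/

open Complex Topology

lemma norm_cpow_neg_sub_cpow_neg_add_one_le {a : ℝ} (ha : 0 < a) {s : ℂ} (hs : -1 ≤ s.re) :
    ‖(a : ℂ) ^ (-s) - ((a : ℂ) + 1) ^ (-s)‖ ≤ ‖s‖ * a ^ (-s.re - 1) := by
  have hderiv : ∀ t ∈ Set.Icc a (a + 1), HasDerivWithinAt (fun t : ℝ => (t : ℂ) ^ (-s))
      (-s * (t : ℂ) ^ (-s - 1)) (Set.Icc a (a + 1)) t := by
    intro t ht
    have ht0 : 0 < t := ha.trans_le ht.1
    exact ((hasDerivAt_id (t : ℂ)).cpow_const (ofReal_mem_slitPlane.mpr ht0)).comp_ofReal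
      |>.hasDerivWithinAt |>.congr_deriv (by simp)
  have hbound : ∀ t ∈ Set.Icc a (a + 1), ‖-s * (t : ℂ) ^ (-s - 1)‖ ≤ ‖s‖ * a ^ (-s.re - 1) := by
    intro t ht
    rw [norm_mul, norm_neg, norm_cpow_eq_rpow_re_of_pos (ha.trans_le ht.1)]
    gcongr
    exact Real.rpow_le_rpow_of_nonpos ha ht.1 (by simp; linarith)
  have := (convex_Icc a (a + 1)).norm_image_sub_le_of_norm_hasDerivWithin_le hderiv hbound
    (Set.left_mem_Icc.mpr (by linarith)) (Set.right_mem_Icc.mpr (by linarith))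
  rw [norm_sub_rev]
  simpa using this

lemma summable_two_mul_add_one_rpow_neg {p : ℝ} (hp : 1 < p) :
    Summable (fun k : ℕ => (2 * k + 1 : ℝ) ^ (-p)) := by
  have hshift : Summable (fun k : ℕ => ((k : ℝ) + 1) ^ (-p)) := by
    simpa using (summable_nat_add_iff 1).mpr (Real.summable_nat_rpow.mpr (by linarith : -p < -1))
  refine hshift.of_nonneg_of_le (fun k => by positivity) (fun k => ?_)
  exact Real.rpow_le_rpow_of_nonpos (by positivity) (by linarith [k.cast_nonneg (α := ℝ)])
    (by linarith)

noncomputable def dirichletEtaPair (k : ℕ) (s : ℂ) : ℂ :=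
  (2 * k + 1 : ℂ) ^ (-s) - (2 * k + 2 : ℂ) ^ (-s)

noncomputable def dirichletEta (s : ℂ) : ℂ := ∑' k, dirichletEtaPair k s

lemma norm_dirichletEtaPair_le {s : ℂ} (hs : -1 ≤ s.re) (k : ℕ) :
    ‖dirichletEtaPair k s‖ ≤ ‖s‖ * (2 * k + 1 : ℝ) ^ (-s.re - 1) := by
  have := norm_cpow_neg_sub_cpow_neg_add_one_le (a := 2 * k + 1) (by positivity) hs
  push_cast at this
  rwa [dirichletEtaPair, show (2 * k + 2 : ℂ) = 2 * k + 1 + 1 by ring]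

lemma summable_dirichletEtaPair {s : ℂ} (hs : 0 < s.re) :
    Summable (fun k => dirichletEtaPair k s) :=
  .of_norm_bounded ((summable_two_mul_add_one_rpow_neg (p := s.re + 1) (by linarith)).mul_left ‖s‖)
    fun k => (norm_dirichletEtaPair_le (by linarith) k).trans_eq (by rw [neg_add'])

lemma differentiable_dirichletEtaPair (k : ℕ) : Differentiable ℂ (dirichletEtaPair k) := by
  unfold dirichletEtaPair
  fun_prop (disch := exact Or.inl (by norm_cast))

lemma differentiableOn_dirichletEta : DifferentiableOn ℂ dirichletEta {s | 0 < s.re} := by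
  intro s (hs : 0 < s.re)
  refine DifferentiableAt.differentiableWithinAt ?_
  set U := {w : ℂ | s.re / 2 < w.re} ∩ Metric.ball 0 (‖s‖ + 1)
  have hU : IsOpen U := (isOpen_lt continuous_const continuous_re).inter Metric.isOpen_ball
  have hsU : s ∈ U := ⟨show s.re / 2 < s.re by linarith, by simp⟩
  have hbound (k : ℕ) (w : ℂ) (hw : w ∈ U) :
      ‖dirichletEtaPair k w‖ ≤ (‖s‖ + 1) * (2 * k + 1 : ℝ) ^ (-(s.re / 2 + 1)) := by
    have hwre : s.re / 2 < w.re := hw.1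
    have hwnorm : ‖w‖ < ‖s‖ + 1 := by simpa using hw.2
    calc ‖dirichletEtaPair k w‖ ≤ ‖w‖ * (2 * k + 1 : ℝ) ^ (-w.re - 1) :=
          norm_dirichletEtaPair_le (by linarith) k
      _ ≤ (‖s‖ + 1) * (2 * k + 1 : ℝ) ^ (-(s.re / 2 + 1)) := by
          gcongr
          · exact le_add_of_nonneg_left (by positivity)
          · linarith
  exact (differentiableOn_tsum_of_summable_norm
    ((summable_two_mul_add_one_rpow_neg (by linarith)).mul_left _)
    (fun k => (differentiable_dirichletEtaPair k).differentiableOn) hU hbound).differentiableAt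
    (hU.mem_nhds hsU)

lemma dirichletEta_eq_of_one_lt_re {s : ℂ} (hs : 1 < s.re) :
    dirichletEta s = (1 - 2 * 2 ^ (-s)) * riemannZeta s := by
  set a : ℕ → ℂ := fun n => ((n : ℂ) + 1) ^ (-s)
  have hζ : HasSum a (riemannZeta s) := by
    have ha : a = fun n : ℕ => 1 / ((n + 1 : ℕ) : ℂ) ^ s := by
      funext n
      simp [a, cpow_neg]
    rw [ha, zeta_eq_tsum_one_div_nat_add_one_cpow hs]
    exact_mod_cast ((summable_nat_add_iff 1).mpr (Complex.summable_one_div_nat_cpow.mpr hs)).hasSum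
  have hodd : HasSum (fun k => a (2 * k + 1)) (2 ^ (-s) * riemannZeta s) := by
    have ha : (fun k => a (2 * k + 1)) = fun k => 2 ^ (-s) * a k := by
      funext k
      calc a (2 * k + 1) = ((2 * (k + 1) : ℕ) : ℂ) ^ (-s) := by push_cast [a]; ring_nf
        _ = 2 ^ (-s) * a k := by rw [Nat.cast_mul, natCast_mul_natCast_cpow]; simp [a]
    exact ha ▸ hζ.mul_left _
  obtain ⟨E, heven⟩ : Summable (fun k => a (2 * k)) :=
    hζ.summable.comp_injective (i := fun k => 2 * k) fun _ _ h => by dsimp at h; omega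
  have hE : E = riemannZeta s - 2 ^ (-s) * riemannZeta s :=
    eq_sub_of_add_eq ((heven.even_add_odd hodd).unique hζ)
  have hpair : (fun k => dirichletEtaPair k s) = fun k => a (2 * k) - a (2 * k + 1) := by
    funext k
    simp only [dirichletEtaPair, a]
    push_cast
    ring_nf
  rw [dirichletEta, hpair, (heven.sub hodd).tsum_eq, hE]
  ring

-- Multiplying by `s - 1` removes the pole of `ζ`, so both sides are analytic on the whole
-- (convex) half-plane.
lemma dirichletEta_eq {s : ℂ} (hs : 0 < s.re) (hs1 : s ≠ 1) :
    dirichletEta s = (1 - 2 * 2 ^ (-s)) * riemannZeta s := by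
  have hζ₁ {w : ℂ} (hw : w ≠ 1) : riemannZeta₁ w = (w - 1) * riemannZeta w := by
    rw [riemannZeta_eq_inv_sub_mul hw, ← mul_assoc, mul_inv_cancel₀ (sub_ne_zero.mpr hw), one_mul]
  have hU : IsOpen {w : ℂ | 0 < w.re} := isOpen_lt continuous_const continuous_re
  have hlhs : AnalyticOnNhd ℂ (fun w => (w - 1) * dirichletEta w) {w | 0 < w.re} :=
    ((differentiableOn_id.sub_const 1).mul differentiableOn_dirichletEta).analyticOnNhd hU
  have hrhs : AnalyticOnNhd ℂ (fun w => (1 - 2 * 2 ^ (-w)) * riemannZeta₁ w) {w | 0 < w.re} := by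
    refine (Differentiable.differentiableOn ?_).analyticOnNhd hU
    fun_prop (disch := exact Or.inl two_ne_zero)
  have heq : (fun w => (w - 1) * dirichletEta w) =ᶠ[𝓝 2]
      fun w => (1 - 2 * 2 ^ (-w)) * riemannZeta₁ w := by
    filter_upwards [(isOpen_lt continuous_const continuous_re).mem_nhds
      (show (1 : ℝ) < (2 : ℂ).re by norm_num)] with w (hw : 1 < w.re)
    have hw1 : w ≠ 1 := by rintro rfl; simp at hw
    rw [dirichletEta_eq_of_one_lt_re hw, hζ₁ hw1]
    ring
  have hcont : (s - 1) * dirichletEta s = (1 - 2 * 2 ^ (-s)) * riemannZeta₁ s :=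
    hlhs.eqOn_of_preconnected_of_eventuallyEq hrhs (convex_halfSpace_re_gt 0).isPreconnected
      (show (0 : ℝ) < (2 : ℂ).re by norm_num) heq hs
  rw [hζ₁ hs1] at hcont
  exact mul_left_cancel₀ (sub_ne_zero.mpr hs1) (hcont.trans (by ring))

lemma dirichletEta_re_pos {x : ℝ} (hx : 0 < x) : 0 < (dirichletEta x).re := by
  have hre (k : ℕ) :
      (dirichletEtaPair k x).re = (2 * k + 1 : ℝ) ^ (-x) - (2 * k + 2 : ℝ) ^ (-x) := by
    rw [dirichletEtaPair, ← ofReal_neg,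
      show (2 * k + 1 : ℂ) = ((2 * k + 1 : ℝ) : ℂ) by push_cast; rfl,
      show (2 * k + 2 : ℂ) = ((2 * k + 2 : ℝ) : ℂ) by push_cast; rfl,
      ← ofReal_cpow (by positivity), ← ofReal_cpow (by positivity), ← ofReal_sub, ofReal_re]
  have hpos (k : ℕ) : 0 < (dirichletEtaPair k x).re := by
    rw [hre, sub_pos]
    exact Real.rpow_lt_rpow_of_neg (by positivity) (by linarith) (by linarith)
  have hsum := summable_dirichletEtaPair (s := x) (by simpa)
  rw [dirichletEta, re_tsum hsum]
  exact (hsum.mapL reCLM).tsum_pos (fun k => (hpos k).le) 0 (hpos 0)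

lemma riemannZeta_re_neg_of_lt_one {x : ℝ} (hx0 : 0 < x) (hx1 : x < 1) :
    (riemannZeta x).re < 0 := by
  have hfactor : (1 - 2 * 2 ^ (-(x : ℂ)) : ℂ) = ((1 - 2 * 2 ^ (-x) : ℝ) : ℂ) := by
    rw [← ofReal_neg, ← ofReal_ofNat, ← ofReal_cpow zero_le_two]
    push_cast
    rfl
  have hneg : 1 - 2 * (2 : ℝ) ^ (-x) < 0 := by
    have h : (2 : ℝ) ^ (-1 : ℝ) < 2 ^ (-x) :=
      Real.rpow_lt_rpow_of_exponent_lt one_lt_two (by linarith)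
    rw [Real.rpow_neg_one] at h
    linarith
  have heta := dirichletEta_eq (s := x) (by simpa) (by exact_mod_cast hx1.ne)
  rw [hfactor] at heta
  have hζ : riemannZeta x = dirichletEta x / ((1 - 2 * 2 ^ (-x) : ℝ) : ℂ) := by
    rw [heta, mul_div_cancel_left₀ _ (ofReal_ne_zero.mpr hneg.ne)]
  rw [hζ, div_ofReal_re]
  exact div_neg_of_pos_of_neg (dirichletEta_re_pos hx0) hneg

lemma one_lt_riemannZeta_re {x : ℝ} (hx : 1 < x) : 1 < (riemannZeta x).re := by
  have hsum : Summable (fun n : ℕ => 1 / ((n : ℝ) + 1) ^ x) := by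
    simpa using (summable_nat_add_iff 1).mpr (Real.summable_one_div_nat_rpow.mpr hx)
  have hζ : riemannZeta x = ((∑' n : ℕ, 1 / ((n : ℝ) + 1) ^ x : ℝ) : ℂ) := by
    rw [zeta_eq_tsum_one_div_nat_add_one_cpow (by simpa), ofReal_tsum]
    congr with n
    rw [ofReal_div, ofReal_one, ofReal_cpow (by positivity)]
    push_cast
    rfl
  rw [hζ, ofReal_re, hsum.tsum_eq_zero_add]
  have htail : 0 < ∑' n : ℕ, 1 / (((n + 1 : ℕ) : ℝ) + 1) ^ x :=
    ((summable_nat_add_iff 1).mpr hsum).tsum_pos (fun _ => by positivity) 0 (by positivity)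
  simpa using htail

/-- For every real ν with ν > 0 and ν ≠ 1, the quantity
n(ν) = (ζ(ν) − 1)/(1 − ν⁻¹) is strictly positive, where ζ is the Riemann zeta function. -/
theorem number_operator_positive (ν : ℝ) (hν : 0 < ν) (hν1 : ν ≠ 1) :
    0 < ((riemannZeta ν).re - 1) / (1 - 1 / ν) := by
  rcases hν1.lt_or_gt with hlt | hgt
  · have hden : 1 - 1 / ν < 0 := sub_neg.mpr (one_lt_one_div hν hlt)
    exact div_pos_of_neg_of_neg (by linarith [riemannZeta_re_neg_of_lt_one hν hlt]) hden
  · have hden : 0 < 1 - 1 / ν := sub_pos.mpr ((div_lt_one hν).mpr hgt)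
    exact div_pos (by linarith [one_lt_riemannZeta_re hgt]) hden
end
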